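/- Let h : ℝⁿ → ℝ be bounded below, let α ∈ (0,1), t_min > 0, λ_min > 0, and let (xᵏ), (vᵏ) be sequences in ℝⁿ, (Hₖ) a sequence of n×n positive semidefinite matrices, (λₖ) a sequence with λₖ ≥ λ_min, and (tₖ) a sequence with tₖ ∈ [t_min, 1]. If h(x^{k+1}) − h(xᵏ) ≤ −(α tₖ / 2)⟨vᵏ, (Hₖ + λₖ I)vᵏ⟩ for every k ≥ 0, then vᵏ → 0 as k → ∞, and the sequence h(xᵏ) converges. -/

import Mathlib

/-!
Bounding `tₖ ≥ t_min` and, using `Hₖ ⪰ 0`, the quadratic form by `λ_min ‖vᵏ‖²` turns the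
hypothesis into the sufficient decrease `c ‖vᵏ‖² ≤ h(xᵏ) - h(x^{k+1})` with
`c = α t_min λ_min / 2 > 0`. Thus `h(xᵏ)` is antitone and bounded below, hence convergent, so its
successive differences tend to `0`, and they squeeze `‖vᵏ‖²`.
-/

open Filter Topology Set
open scoped RealInnerProductSpace

theorem tendsto_and_exists_tendsto_of_sufficient_decrease {f g : ℕ → ℝ} {c : ℝ} (hc : 0 < c)
    (hg : ∀ k, 0 ≤ g k) (hdec : ∀ k, c * g k ≤ f k - f (k + 1)) (hf : BddBelow (range f)) :
    Tendsto g atTop (𝓝 0) ∧ ∃ a, Tendsto f atTop (𝓝 a) := by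
  have hanti : Antitone f :=
    antitone_nat_of_succ_le fun k => by nlinarith [hdec k, hg k]
  have hconv := tendsto_atTop_ciInf hanti hf
  refine ⟨?_, _, hconv⟩
  have hdiff : Tendsto (fun k => (f k - f (k + 1)) / c) atTop (𝓝 0) := by
    simpa using (hconv.sub (hconv.comp (tendsto_add_atTop_nat 1))).div_const c
  refine squeeze_zero hg (fun k => ?_) hdiff
  rw [le_div_iff₀ hc, mul_comm]
  exact hdec k

theorem tendsto_zero_of_tendsto_norm_sq_zero {α E : Type*} [SeminormedAddCommGroup E]
    {l : Filter α} {v : α → E} (hv : Tendsto (fun k => ‖v k‖ ^ 2) l (𝓝 0)) :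
    Tendsto v l (𝓝 0) := by
  rw [tendsto_zero_iff_norm_tendsto_zero]
  simpa [Real.sqrt_sq (norm_nonneg _)] using hv.sqrt

section QuadraticForm

variable {ι : Type*} [Fintype ι] [DecidableEq ι]

theorem inner_toEuclideanLin_add_smul_one (H : Matrix ι ι ℝ) (μ : ℝ) (z : EuclideanSpace ℝ ι) :
    ⟪z, Matrix.toEuclideanLin (H + μ • 1) z⟫ = ⟪z, Matrix.toEuclideanLin H z⟫ + μ * ‖z‖ ^ 2 := by
  have hone : Matrix.toEuclideanLin (1 : Matrix ι ι ℝ) z = z := by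
    simp [Matrix.toLpLin_one]
  rw [map_add, map_smul, LinearMap.add_apply, LinearMap.smul_apply, inner_add_right,
    inner_smul_right, hone, real_inner_self_eq_norm_sq]

theorem mul_norm_sq_le_inner_toEuclideanLin_add_smul_one {H : Matrix ι ι ℝ} {μ₀ μ : ℝ}
    (hH : ∀ z : EuclideanSpace ℝ ι, 0 ≤ ⟪z, Matrix.toEuclideanLin H z⟫) (hμ : μ₀ ≤ μ)
    (z : EuclideanSpace ℝ ι) :
    μ₀ * ‖z‖ ^ 2 ≤ ⟪z, Matrix.toEuclideanLin (H + μ • 1) z⟫ := by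
  rw [inner_toEuclideanLin_add_smul_one]
  nlinarith [hH z, sq_nonneg ‖z‖]

end QuadraticForm

/-- If `h` is bounded below and each step of the descent method satisfies the Armijo-type
decrease `h(x^{k+1}) − h(xᵏ) ≤ −(α tₖ/2)⟨vᵏ, (Hₖ + λₖ I)vᵏ⟩` with `tₖ ∈ [t_min, 1]` and
`λₖ ≥ λ_min > 0`, then `vᵏ → 0` and `h(xᵏ)` converges. -/
theorem stmt_13 (nn : ℕ) (h : EuclideanSpace ℝ (Fin nn) → ℝ)
    (hbdd : ∃ B : ℝ, ∀ y, B ≤ h y)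
    (α : ℝ) (hα : α ∈ Set.Ioo (0:ℝ) 1)
    (tmin : ℝ) (htmin : 0 < tmin)
    (lammin : ℝ) (hlammin : 0 < lammin)
    (x v : ℕ → EuclideanSpace ℝ (Fin nn))
    (Hs : ℕ → Matrix (Fin nn) (Fin nn) ℝ)
    (hHs : ∀ k, ∀ z : EuclideanSpace ℝ (Fin nn), 0 ≤ ⟪z, Matrix.toEuclideanLin (Hs k) z⟫)
    (lam : ℕ → ℝ) (hlam : ∀ k, lammin ≤ lam k)
    (t : ℕ → ℝ) (ht : ∀ k, t k ∈ Set.Icc tmin 1)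
    (hdec : ∀ k : ℕ, h (x (k+1)) - h (x k) ≤
      -(α * t k / 2) * ⟪v k, Matrix.toEuclideanLin (Hs k + lam k • 1) (v k)⟫) :
    Filter.Tendsto v Filter.atTop (nhds 0) ∧
    ∃ c : ℝ, Filter.Tendsto (fun k => h (x k)) Filter.atTop (nhds c) := by
  obtain ⟨B, hB⟩ := hbdd
  have hα0 := hα.1
  have hsuff : ∀ k, (α * tmin / 2 * lammin) * ‖v k‖ ^ 2 ≤ h (x k) - h (x (k + 1)) := fun k => by
    have hstep : α * tmin / 2 ≤ α * t k / 2 := by nlinarith [(ht k).1]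
    have hquad := mul_norm_sq_le_inner_toEuclideanLin_add_smul_one (hHs k) (hlam k) (v k)
    have hstep0 : 0 ≤ α * tmin / 2 := by positivity
    have hprod := mul_le_mul hstep hquad (by positivity) (hstep0.trans hstep)
    linarith [hdec k]
  obtain ⟨hv, hconv⟩ := tendsto_and_exists_tendsto_of_sufficient_decrease (by positivity)
    (fun k => sq_nonneg ‖v k‖) hsuff ⟨B, by rintro _ ⟨k, rfl⟩; exact hB _⟩
  exact ⟨tendsto_zero_of_tendsto_norm_sq_zero hv, hconv⟩
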